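/- arXiv:math/0311329 — 5 statements merged into one kernel-verified Lean document; each statement's English description precedes it below -/
import Mathlib

section
/- Let A be a unital Banach algebra (for example, the algebra of continuous linear endomorphisms of a Banach space) and let N₁, N₂ ∈ A satisfy N₁² = 0, N₂² = 0 and 2·‖N₁‖·‖N₂‖ < 1. Then 1 + N₁ + N₂ is invertible in A and ‖(1 + N₁ + N₂)⁻¹‖ ≤ (1 + ‖N₁‖ + ‖N₂‖)/(1 − 2·‖N₁‖·‖N₂‖). -/
/-!
Square-zero perturbations of `1` are units with explicit inverses, `(1 + N)⁻¹ = 1 - N`, and when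
`N₁² = N₂² = 0` one has the factorization `1 + N₁ + N₂ = (1 + N₁) (1 - N₁ N₂) (1 + N₂)`.
The middle factor is inverted by the Neumann series since `‖N₁ N₂‖ ≤ ‖N₁‖ ‖N₂‖ < 1`, so
`‖(1 + N₁ + N₂)⁻¹‖ ≤ (1 + ‖N₂‖) (1 - ‖N₁‖ ‖N₂‖)⁻¹ (1 + ‖N₁‖)`, which is at most the claimed bound.
-/

section Ring

variable {R : Type*} [Ring R]

def Units.oneAddOfSqEqZero {x : R} (hx : x ^ 2 = 0) : Rˣ where
  val := 1 + x
  inv := 1 - x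
  val_inv := by rw [show (1 + x) * (1 - x) = 1 - x ^ 2 by noncomm_ring, hx, sub_zero]
  inv_val := by rw [show (1 - x) * (1 + x) = 1 - x ^ 2 by noncomm_ring, hx, sub_zero]

@[simp]
theorem Units.val_oneAddOfSqEqZero {x : R} (hx : x ^ 2 = 0) :
    (Units.oneAddOfSqEqZero hx : R) = 1 + x := rfl

@[simp]
theorem Units.val_inv_oneAddOfSqEqZero {x : R} (hx : x ^ 2 = 0) :
    ((Units.oneAddOfSqEqZero hx)⁻¹ : Rˣ) = (1 - x : R) := rfl

theorem one_add_mul_one_sub_mul_mul_one_add_of_sq_eq_zero {x y : R} (hx : x ^ 2 = 0)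
    (hy : y ^ 2 = 0) : (1 + x) * (1 - x * y) * (1 + y) = 1 + x + y := by
  rw [show (1 + x) * (1 - x * y) * (1 + y)
      = 1 + x + y - (x * y ^ 2 + x ^ 2 * y + x ^ 2 * y ^ 2) by noncomm_ring, hx, hy]
  simp

end Ring

section NormedRing

variable {R : Type*} [NormedRing R] [NormOneClass R]

theorem norm_one_sub_le (x : R) : ‖1 - x‖ ≤ 1 + ‖x‖ :=
  (norm_sub_le _ _).trans_eq (by rw [norm_one])

theorem Units.norm_inv_oneSub_le [HasSummableGeomSeries R] (x : R) (h : ‖x‖ < 1) :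
    ‖((Units.oneSub x h)⁻¹ : Rˣ).val‖ ≤ (1 - ‖x‖)⁻¹ := by
  have h_tsum := tsum_geometric_le_of_norm_lt_one x h
  rwa [norm_one, sub_self, zero_add] at h_tsum

end NormedRing

theorem one_add_mul_one_add_div_one_sub_mul_le {a b : ℝ} (ha : 0 ≤ a) (hb : 0 ≤ b)
    (h : 2 * a * b < 1) : (1 + b) * (1 + a) / (1 - a * b) ≤ (1 + a + b) / (1 - 2 * a * b) := by
  rw [div_le_div_iff₀ (by nlinarith) (by linarith)]
  nlinarith [mul_nonneg ha hb, mul_nonneg (mul_nonneg ha hb) (mul_nonneg ha hb),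
    mul_nonneg (mul_nonneg ha ha) hb, mul_nonneg ha (mul_nonneg hb hb)]

theorem stmt_1_general {A : Type*} [NormedRing A] [NormOneClass A] [CompleteSpace A]
    (N₁ N₂ : A)
    (h₁ : N₁ ^ 2 = 0) (h₂ : N₂ ^ 2 = 0)
    (hnorm : 2 * ‖N₁‖ * ‖N₂‖ < 1) :
    ∃ u : Aˣ, (u : A) = 1 + N₁ + N₂ ∧
      ‖((u⁻¹ : Aˣ) : A)‖ ≤ (1 + ‖N₁‖ + ‖N₂‖) / (1 - 2 * ‖N₁‖ * ‖N₂‖) := by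
  have hprod : ‖N₁ * N₂‖ ≤ ‖N₁‖ * ‖N₂‖ := norm_mul_le _ _
  have hgap : 0 < 1 - ‖N₁‖ * ‖N₂‖ := by nlinarith [norm_nonneg N₁, norm_nonneg N₂]
  have hprod_lt : ‖N₁ * N₂‖ < 1 := by linarith
  refine ⟨Units.oneAddOfSqEqZero h₁ * Units.oneSub _ hprod_lt * Units.oneAddOfSqEqZero h₂,
    by simpa using one_add_mul_one_sub_mul_mul_one_add_of_sq_eq_zero h₁ h₂, ?_⟩
  simp only [mul_inv_rev, Units.val_mul, Units.val_inv_oneAddOfSqEqZero, ← mul_assoc]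
  calc ‖(1 - N₂) * ((Units.oneSub _ hprod_lt)⁻¹ : Aˣ).val * (1 - N₁)‖
      ≤ ‖1 - N₂‖ * ‖((Units.oneSub _ hprod_lt)⁻¹ : Aˣ).val‖ * ‖1 - N₁‖ := norm_mul₃_le
    _ ≤ (1 + ‖N₂‖) * (1 - ‖N₁‖ * ‖N₂‖)⁻¹ * (1 + ‖N₁‖) := by
      have hinv := (Units.norm_inv_oneSub_le _ hprod_lt).trans
        (inv_anti₀ hgap (sub_le_sub_left hprod 1))
      gcongr ?_ * ?_ * ?_ <;> apply norm_one_sub_le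
    _ ≤ (1 + ‖N₁‖ + ‖N₂‖) / (1 - 2 * ‖N₁‖ * ‖N₂‖) := by
      rw [mul_right_comm, ← div_eq_mul_inv]
      exact one_add_mul_one_add_div_one_sub_mul_le (norm_nonneg _) (norm_nonneg _) hnorm

/-- In a unital Banach algebra, if `N₁² = 0`, `N₂² = 0` and `2‖N₁‖‖N₂‖ < 1`, then
`1 + N₁ + N₂` is invertible with
`‖(1 + N₁ + N₂)⁻¹‖ ≤ (1 + ‖N₁‖ + ‖N₂‖)/(1 - 2‖N₁‖‖N₂‖)`. -/
theorem stmt_1 {A : Type*} [NormedRing A] [NormOneClass A] [CompleteSpace A]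
    [NormedAlgebra ℝ A] (N₁ N₂ : A)
    (h₁ : N₁ ^ 2 = 0) (h₂ : N₂ ^ 2 = 0)
    (hnorm : 2 * ‖N₁‖ * ‖N₂‖ < 1) :
    ∃ u : Aˣ, (u : A) = 1 + N₁ + N₂ ∧
      ‖((u⁻¹ : Aˣ) : A)‖ ≤ (1 + ‖N₁‖ + ‖N₂‖) / (1 - 2 * ‖N₁‖ * ‖N₂‖) :=
  stmt_1_general N₁ N₂ h₁ h₂ hnorm
end

section
/- Let E be a Banach space, T : E → E a continuous linear operator whose range is a closed subspace, and 0 ≤ η ≤ 1/2 a real number such that ‖z − T z‖ ≤ η·‖z‖ for every z in the range of T. Then T maps range T bijectively onto itself, and E decomposes as the (internal) direct sum E = range T ⊕ ker T; i.e., range T and ker T are complementary subspaces of E. -/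
/-!
On the closed, hence complete, subspace `R = range T`, the restriction `S` of `T` satisfies
`‖1 - S‖ ≤ η < 1`, so `S` is invertible by the Neumann series and `T` maps `R` bijectively onto
itself. Any linear map with this property splits its domain: `x = z + (x - z)` where `z ∈ R`
is the preimage in `R` of `T x`, and `R ∩ ker T = 0` by injectivity on `R`.
-/

open Function

theorem LinearMap.isCompl_range_ker_of_bijOn_range {R M : Type*} [Ring R] [AddCommGroup M]
    [Module R M] (f : M →ₗ[R] M) (hf : Set.BijOn f (range f) (range f)) :
    IsCompl (range f) (ker f) := by
  constructor
  · refine Submodule.disjoint_def.2 fun x hx hker => hf.injOn hx (zero_mem _) ?_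
    rw [mem_ker.1 hker, map_zero]
  · refine codisjoint_iff.2 (eq_top_iff.2 fun x _ => ?_)
    obtain ⟨z, hz, hzx⟩ := hf.surjOn (mem_range_self f x)
    have hker : x - z ∈ ker f := by rw [mem_ker, map_sub, hzx, sub_self]
    simpa using Submodule.add_mem_sup hz hker

namespace ContinuousLinearMap

variable {𝕜 E : Type*} [NontriviallyNormedField 𝕜] [NormedAddCommGroup E] [NormedSpace 𝕜 E]
  [CompleteSpace E]

theorem bijective_of_norm_sub_apply_le (S : E →L[𝕜] E) {η : ℝ} (hη0 : 0 ≤ η) (hη1 : η < 1)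
    (h : ∀ x, ‖x - S x‖ ≤ η * ‖x‖) : Bijective S := by
  have hnorm : ‖1 - S‖ < 1 := (opNorm_le_bound _ hη0 h).trans_lt hη1
  exact isUnit_iff_bijective.1 (sub_sub_cancel 1 S ▸ isUnit_one_sub_of_norm_lt_one hnorm)

theorem bijOn_range_of_norm_sub_apply_le (T : E →L[𝕜] E)
    (hclosed : IsClosed (LinearMap.range (T : E →ₗ[𝕜] E) : Set E)) {η : ℝ} (hη0 : 0 ≤ η)
    (hη1 : η < 1) (h : ∀ z ∈ LinearMap.range (T : E →ₗ[𝕜] E), ‖z - T z‖ ≤ η * ‖z‖) :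
    Set.BijOn T (LinearMap.range (T : E →ₗ[𝕜] E)) (LinearMap.range (T : E →ₗ[𝕜] E)) := by
  set R := LinearMap.range (T : E →ₗ[𝕜] E)
  have : CompleteSpace R := hclosed.completeSpace_coe
  have hmaps : Set.MapsTo T R R := fun x _ => LinearMap.mem_range_self (T : E →ₗ[𝕜] E) x
  let S : R →L[𝕜] R := (T.comp R.subtypeL).codRestrict R fun x => hmaps x.2
  have hS : Bijective S := S.bijective_of_norm_sub_apply_le hη0 hη1 fun x => h x x.2
  exact ⟨hmaps, hmaps.restrict_inj.1 hS.1, hmaps.restrict_surjective_iff.1 hS.2⟩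

end ContinuousLinearMap

/-- If `T : E → E` is a continuous linear operator with closed range on a Banach space,
`0 ≤ η ≤ 1/2`, and `‖z - T z‖ ≤ η‖z‖` for every `z` in the range of `T`, then `T` maps
its range bijectively onto itself and `E = range T ⊕ ker T` (they are complementary). -/
theorem stmt_4 {E : Type*} [NormedAddCommGroup E] [NormedSpace ℝ E] [CompleteSpace E]
    (T : E →L[ℝ] E) (hclosed : IsClosed (LinearMap.range (T : E →ₗ[ℝ] E) : Set E))
    (η : ℝ) (hη0 : 0 ≤ η) (hη : η ≤ 1 / 2)
    (h : ∀ z ∈ LinearMap.range (T : E →ₗ[ℝ] E), ‖z - T z‖ ≤ η * ‖z‖) :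
    Set.BijOn T (LinearMap.range (T : E →ₗ[ℝ] E) : Set E) (LinearMap.range (T : E →ₗ[ℝ] E) : Set E) ∧
      IsCompl (LinearMap.range (T : E →ₗ[ℝ] E)) (LinearMap.ker (T : E →ₗ[ℝ] E)) := by
  have hbij := T.bijOn_range_of_norm_sub_apply_le hclosed hη0 (by linarith) h
  exact ⟨hbij, LinearMap.isCompl_range_ker_of_bijOn_range (T : E →ₗ[ℝ] E) hbij⟩
end

section
/- Let E be a Banach space, T : E → E a continuous linear operator whose range is a closed subspace, and 0 ≤ η ≤ 1/2 a real number such that ‖z − T z‖ ≤ η·‖z‖ for every z in the range of T. If ζ ∈ E is written ζ = z + z₀ with z ∈ range T and z₀ ∈ ker T, then ‖z‖ ≤ 2·‖T‖·‖ζ‖ and ‖z₀‖ ≤ (1 + 2·‖T‖)·‖ζ‖; in particular ‖z‖ + ‖z₀‖ ≤ (1 + 4·‖T‖)·‖ζ‖. -/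
/-!
Since `T` kills `z₀`, `T ζ = T z`; and `z` is moved by `T` by at most half its norm, so
`‖z‖ ≤ 2‖T z‖ = 2‖T ζ‖ ≤ 2‖T‖‖ζ‖`. The bound on `z₀ = ζ - z` is then the triangle inequality.
-/

theorem norm_le_two_mul_norm_of_norm_sub_le_half {E : Type*} [SeminormedAddCommGroup E]
    {x y : E} (h : ‖x - y‖ ≤ 1 / 2 * ‖x‖) : ‖x‖ ≤ 2 * ‖y‖ := by
  linarith [norm_sub_norm_le x y]

section

variable {𝕜 E : Type*} [NontriviallyNormedField 𝕜] [SeminormedAddCommGroup E]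
  [NormedSpace 𝕜 E] (T : E →L[𝕜] E) {z z₀ : E}

theorem ContinuousLinearMap.norm_le_two_mul_opNorm_mul_norm_add_of_apply_eq_zero
    (hz : ‖z - T z‖ ≤ 1 / 2 * ‖z‖) (hz₀ : T z₀ = 0) : ‖z‖ ≤ 2 * ‖T‖ * ‖z + z₀‖ := by
  have hT : T (z + z₀) = T z := by rw [map_add, hz₀, add_zero]
  calc ‖z‖ ≤ 2 * ‖T z‖ := norm_le_two_mul_norm_of_norm_sub_le_half hz
    _ = 2 * ‖T (z + z₀)‖ := by rw [hT]
    _ ≤ 2 * (‖T‖ * ‖z + z₀‖) := by gcongr; exact T.le_opNorm _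
    _ = 2 * ‖T‖ * ‖z + z₀‖ := by ring

end

theorem stmt_6_general {E : Type*} [NormedAddCommGroup E] [NormedSpace ℝ E]
    (T : E →L[ℝ] E)
    (η : ℝ) (hη : η ≤ 1 / 2)
    (h : ∀ z ∈ LinearMap.range (T : E →ₗ[ℝ] E), ‖z - T z‖ ≤ η * ‖z‖)
    (ζ z z₀ : E) (hz : z ∈ LinearMap.range (T : E →ₗ[ℝ] E)) (hz₀ : z₀ ∈ LinearMap.ker (T : E →ₗ[ℝ] E))
    (hsum : ζ = z + z₀) :
    ‖z‖ ≤ 2 * ‖T‖ * ‖ζ‖ ∧ ‖z₀‖ ≤ (1 + 2 * ‖T‖) * ‖ζ‖ ∧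
      ‖z‖ + ‖z₀‖ ≤ (1 + 4 * ‖T‖) * ‖ζ‖ := by
  subst hsum
  have hhalf : ‖z - T z‖ ≤ 1 / 2 * ‖z‖ :=
    (h z hz).trans (mul_le_mul_of_nonneg_right hη (norm_nonneg z))
  have hzb := T.norm_le_two_mul_opNorm_mul_norm_add_of_apply_eq_zero hhalf hz₀
  have hz₀b := norm_le_add_norm_add' z z₀
  exact ⟨hzb, by linarith, by linarith⟩

/-- Let `T : E → E` be a continuous linear operator with closed range on a Banach space,
`0 ≤ η ≤ 1/2`, with `‖z - T z‖ ≤ η‖z‖` for every `z` in the range of `T`. If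
`ζ = z + z₀` with `z ∈ range T` and `z₀ ∈ ker T`, then `‖z‖ ≤ 2‖T‖‖ζ‖`,
`‖z₀‖ ≤ (1 + 2‖T‖)‖ζ‖`, and `‖z‖ + ‖z₀‖ ≤ (1 + 4‖T‖)‖ζ‖`. -/
theorem stmt_6 {E : Type*} [NormedAddCommGroup E] [NormedSpace ℝ E] [CompleteSpace E]
    (T : E →L[ℝ] E) (hclosed : IsClosed (LinearMap.range (T : E →ₗ[ℝ] E) : Set E))
    (η : ℝ) (hη0 : 0 ≤ η) (hη : η ≤ 1 / 2)
    (h : ∀ z ∈ LinearMap.range (T : E →ₗ[ℝ] E), ‖z - T z‖ ≤ η * ‖z‖)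
    (ζ z z₀ : E) (hz : z ∈ LinearMap.range (T : E →ₗ[ℝ] E)) (hz₀ : z₀ ∈ LinearMap.ker (T : E →ₗ[ℝ] E))
    (hsum : ζ = z + z₀) :
    ‖z‖ ≤ 2 * ‖T‖ * ‖ζ‖ ∧ ‖z₀‖ ≤ (1 + 2 * ‖T‖) * ‖ζ‖ ∧
      ‖z‖ + ‖z₀‖ ≤ (1 + 4 * ‖T‖) * ‖ζ‖ :=
  stmt_6_general T η hη h ζ z z₀ hz hz₀ hsum
end

section
/- Let E and F be Banach spaces, Π : F → F a continuous linear projection (Π∘Π = Π), and D : E → F, R₁ : F → E, R₂ : F → E continuous linear maps satisfying: R₁∘Π = 0; (id_F − Π)∘D∘R₁ = id_F − Π; R₂∘(id_F − Π) = 0; and Π∘D∘R₂ = Π. Define N₁ = Π∘D∘R₁ and N₂ = (id_F − Π)∘D∘R₂. Then: (i) N₁∘N₁ = 0 and N₂∘N₂ = 0; (ii) D∘(R₁ + R₂) = id_F + N₁ + N₂; and (iii) if moreover 2·‖N₁‖·‖N₂‖ < 1, then D admits a continuous linear right inverse R : F → E with D∘R = id_F and ‖R‖ ≤ (‖R₁‖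 + ‖R₂‖)·(1 + ‖N₁‖ + ‖N₂‖)/(1 − 2·‖N₁‖·‖N₂‖). -/
/-!
Writing `S = N₁ + N₂`, part (ii) says `D ∘ (R₁ + R₂) = 1 + S`. Since `N₁² = N₂² = 0`, we get
`(1 + S)(1 - S) = 1 - S² = 1 - (N₁N₂ + N₂N₁)`, and `‖N₁N₂ + N₂N₁‖ ≤ 2‖N₁‖‖N₂‖ < 1`, so
`1 - S²` is inverted by its Neumann series. Hence `R = (R₁ + R₂)(1 - S)(1 - S²)⁻¹` is a right
inverse of `D`, and the norm bound is read off this formula.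
-/

open ContinuousLinearMap

section Algebra

variable {𝕜 E F : Type*} [NontriviallyNormedField 𝕜]
  [NormedAddCommGroup E] [NormedSpace 𝕜 E] [NormedAddCommGroup F] [NormedSpace 𝕜 F]

theorem ContinuousLinearMap.comp_comp_self_eq_zero_of_comp_eq_zero {Q : F →L[𝕜] F}
    (D : E →L[𝕜] F) {R : F →L[𝕜] E} (h : R.comp Q = 0) :
    (Q.comp (D.comp R)).comp (Q.comp (D.comp R)) = 0 := by
  ext y
  simpa using congr(Q (D ($h (D (R y)))))

theorem ContinuousLinearMap.comp_add_eq_id_add {P : F →L[𝕜] F} {D : E →L[𝕜] F}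
    {R₁ R₂ : F →L[𝕜] E}
    (h₁ : (ContinuousLinearMap.id 𝕜 F - P).comp (D.comp R₁) = ContinuousLinearMap.id 𝕜 F - P)
    (h₂ : P.comp (D.comp R₂) = P) :
    D.comp (R₁ + R₂) = ContinuousLinearMap.id 𝕜 F + P.comp (D.comp R₁) +
      (ContinuousLinearMap.id 𝕜 F - P).comp (D.comp R₂) := by
  have hDR₁ : D.comp R₁ = ContinuousLinearMap.id 𝕜 F - P + P.comp (D.comp R₁) :=
    eq_add_of_sub_eq (by rwa [sub_comp, id_comp] at h₁)
  have hDR₂ : D.comp R₂ = P + (ContinuousLinearMap.id 𝕜 F - P).comp (D.comp R₂) := by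
    rw [sub_comp, id_comp, h₂, add_sub_cancel]
  calc D.comp (R₁ + R₂) = D.comp R₁ + D.comp R₂ := comp_add _ _ _
    _ = (ContinuousLinearMap.id 𝕜 F - P + P.comp (D.comp R₁)) +
          (P + (ContinuousLinearMap.id 𝕜 F - P).comp (D.comp R₂)) := by rw [← hDR₁, ← hDR₂]
    _ = _ := by abel

end Algebra

theorem norm_add_mul_self_le_of_mul_self_eq_zero {A : Type*} [NormedRing A] {a b : A}
    (ha : a * a = 0) (hb : b * b = 0) : ‖(a + b) * (a + b)‖ ≤ 2 * ‖a‖ * ‖b‖ :=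
  calc ‖(a + b) * (a + b)‖ = ‖a * b + b * a‖ := by
        rw [add_mul, mul_add, mul_add, ha, hb, zero_add, add_zero]
    _ ≤ ‖a‖ * ‖b‖ + ‖b‖ * ‖a‖ := norm_add_le_of_le (norm_mul_le a b) (norm_mul_le b a)
    _ = 2 * ‖a‖ * ‖b‖ := by ring

theorem ContinuousLinearMap.exists_one_add_mul_eq_one_of_norm_mul_self_le
    {𝕜 F : Type*} [NontriviallyNormedField 𝕜] [NormedAddCommGroup F] [NormedSpace 𝕜 F]
    [CompleteSpace F] (S : F →L[𝕜] F) {c : ℝ} (hS : ‖S * S‖ ≤ c) (hc : c < 1) :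
    ∃ T : F →L[𝕜] F, (1 + S) * T = 1 ∧ ‖T‖ ≤ (1 + ‖S‖) / (1 - c) := by
  have hlt : ‖S * S‖ < 1 := hS.trans_lt hc
  have hone : ‖(1 : F →L[𝕜] F)‖ ≤ 1 := norm_id_le
  set G := ∑' n : ℕ, (S * S) ^ n
  refine ⟨(1 - S) * G, ?_, ?_⟩
  · calc (1 + S) * ((1 - S) * G) = (1 - S * S) * G := by noncomm_ring
      _ = 1 := mul_neg_geom_series (S * S) hlt
  · have hG : ‖G‖ ≤ (1 - c)⁻¹ := by
      have := tsum_geometric_le_of_norm_lt_one (S * S) hlt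
      have : (1 - ‖S * S‖)⁻¹ ≤ (1 - c)⁻¹ := inv_anti₀ (by linarith) (by linarith)
      linarith
    calc ‖(1 - S) * G‖ ≤ ‖1 - S‖ * ‖G‖ := norm_mul_le _ _
      _ ≤ (1 + ‖S‖) * (1 - c)⁻¹ := by
        gcongr
        exact (norm_sub_le _ _).trans (by linarith)
      _ = (1 + ‖S‖) / (1 - c) := div_eq_mul_inv _ _ |>.symm

theorem stmt_13_general {E F : Type*}
    [NormedAddCommGroup E] [NormedSpace ℝ E]
    [NormedAddCommGroup F] [NormedSpace ℝ F] [CompleteSpace F]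
    (P : F →L[ℝ] F)
    (D : E →L[ℝ] F) (R₁ R₂ : F →L[ℝ] E)
    (h₁ : R₁.comp P = 0)
    (h₂ : (ContinuousLinearMap.id ℝ F - P).comp (D.comp R₁) =
      ContinuousLinearMap.id ℝ F - P)
    (h₃ : R₂.comp (ContinuousLinearMap.id ℝ F - P) = 0)
    (h₄ : P.comp (D.comp R₂) = P)
    (N₁ N₂ : F →L[ℝ] F)
    (hN₁ : N₁ = P.comp (D.comp R₁))
    (hN₂ : N₂ = (ContinuousLinearMap.id ℝ F - P).comp (D.comp R₂)) :
    N₁.comp N₁ = 0 ∧ N₂.comp N₂ = 0 ∧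
      D.comp (R₁ + R₂) = ContinuousLinearMap.id ℝ F + N₁ + N₂ ∧
      (2 * ‖N₁‖ * ‖N₂‖ < 1 →
        ∃ R : F →L[ℝ] E, D.comp R = ContinuousLinearMap.id ℝ F ∧
          ‖R‖ ≤ (‖R₁‖ + ‖R₂‖) * (1 + ‖N₁‖ + ‖N₂‖) / (1 - 2 * ‖N₁‖ * ‖N₂‖)) := by
  have hN₁N₁ : N₁.comp N₁ = 0 := hN₁ ▸ comp_comp_self_eq_zero_of_comp_eq_zero D h₁
  have hN₂N₂ : N₂.comp N₂ = 0 := hN₂ ▸ comp_comp_self_eq_zero_of_comp_eq_zero D h₃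
  have hDR : D.comp (R₁ + R₂) = 1 + (N₁ + N₂) := by
    rw [hN₁, hN₂, comp_add_eq_id_add h₂ h₄, add_assoc, one_def]
  refine ⟨hN₁N₁, hN₂N₂, hDR.trans (add_assoc _ _ _).symm, fun hsmall => ?_⟩
  obtain ⟨T, hT, hTnorm⟩ := exists_one_add_mul_eq_one_of_norm_mul_self_le (N₁ + N₂)
    (norm_add_mul_self_le_of_mul_self_eq_zero hN₁N₁ hN₂N₂) hsmall
  refine ⟨(R₁ + R₂).comp T, ?_, ?_⟩
  · rw [← comp_assoc, hDR, ← mul_def, hT, one_def]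
  · calc ‖(R₁ + R₂).comp T‖ ≤ (‖R₁‖ + ‖R₂‖) * ((1 + ‖N₁ + N₂‖) / (1 - 2 * ‖N₁‖ * ‖N₂‖)) :=
          (opNorm_comp_le _ _).trans
            (mul_le_mul (norm_add_le _ _) hTnorm (norm_nonneg _) (by positivity))
      _ ≤ (‖R₁‖ + ‖R₂‖) * (1 + ‖N₁‖ + ‖N₂‖) / (1 - 2 * ‖N₁‖ * ‖N₂‖) := by
        rw [mul_div_assoc]
        have : 0 < 1 - 2 * ‖N₁‖ * ‖N₂‖ := by linarith
        gcongr _ * (?_ / _)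
        linarith [norm_add_le N₁ N₂]

/-- Abstract construction of a full right inverse from two partial right inverses.
Let `P : F → F` be a continuous linear projection and `D, R₁, R₂` continuous linear
maps with `R₁∘P = 0`, `(id - P)∘D∘R₁ = id - P`, `R₂∘(id - P) = 0`, `P∘D∘R₂ = P`.
With `N₁ = P∘D∘R₁` and `N₂ = (id - P)∘D∘R₂`: (i) `N₁² = 0`, `N₂² = 0`;
(ii) `D∘(R₁ + R₂) = id + N₁ + N₂`; (iii) if `2‖N₁‖‖N₂‖ < 1`, then `D` has a
continuous linear right inverse `R` with
`‖R‖ ≤ (‖R₁‖ + ‖R₂‖)(1 + ‖N₁‖ + ‖N₂‖)/(1 - 2‖N₁‖‖N₂‖)`. -/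
theorem stmt_13 {E F : Type*}
    [NormedAddCommGroup E] [NormedSpace ℝ E] [CompleteSpace E]
    [NormedAddCommGroup F] [NormedSpace ℝ F] [CompleteSpace F]
    (P : F →L[ℝ] F) (hP : P.comp P = P)
    (D : E →L[ℝ] F) (R₁ R₂ : F →L[ℝ] E)
    (h₁ : R₁.comp P = 0)
    (h₂ : (ContinuousLinearMap.id ℝ F - P).comp (D.comp R₁) =
      ContinuousLinearMap.id ℝ F - P)
    (h₃ : R₂.comp (ContinuousLinearMap.id ℝ F - P) = 0)
    (h₄ : P.comp (D.comp R₂) = P)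
    (N₁ N₂ : F →L[ℝ] F)
    (hN₁ : N₁ = P.comp (D.comp R₁))
    (hN₂ : N₂ = (ContinuousLinearMap.id ℝ F - P).comp (D.comp R₂)) :
    N₁.comp N₁ = 0 ∧ N₂.comp N₂ = 0 ∧
      D.comp (R₁ + R₂) = ContinuousLinearMap.id ℝ F + N₁ + N₂ ∧
      (2 * ‖N₁‖ * ‖N₂‖ < 1 →
        ∃ R : F →L[ℝ] E, D.comp R = ContinuousLinearMap.id ℝ F ∧
          ‖R‖ ≤ (‖R₁‖ + ‖R₂‖) * (1 + ‖N₁‖ + ‖N₂‖) / (1 - 2 * ‖N₁‖ * ‖N₂‖)) :=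
  stmt_13_general P D R₁ R₂ h₁ h₂ h₃ h₄ N₁ N₂ hN₁ hN₂
end

section
/- Let E and F be Banach spaces, Π : F → F a continuous linear projection (Π∘Π = Π), and D : E → F, R̃ : F → E continuous linear maps. Let 0 ≤ k ≤ 1/2 and suppose that ‖(id_F − Π)(D(R̃(ζ))) − ζ‖ ≤ k·‖ζ‖ for every ζ ∈ ker Π. Then there exists a continuous linear map R₁ : F → E with the following properties: (i) R₁(ζ) = 0 for every ζ in the range of Π; (ii) (id_F − Π)(D(R₁(ζ))) = ζ for every ζ ∈ ker Π; (iii) ‖R₁(ζ)‖ ≤ 2·‖R̃‖·‖ζ‖ for every ζ ∈ ker Π; and (iv) ‖R₁(ζ) − R̃(ζ)‖ ≤ 2·k·‖R̃‖·‖ζ‖ for every ζ ∈ ker Π. -/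
/-! On the closed subspace `ker P`, the operator `T = (id - P) ∘ D ∘ R'` is within `k ≤ 1/2` of the
identity, so a Neumann series gives a right inverse `V` of `T` with `‖V‖ ≤ 2` and `‖V - 1‖ ≤ 2k`
(from `‖Vx - x‖ = ‖Vx - TVx‖ ≤ k‖Vx‖`). Then `R₁ = R' ∘ V ∘ (id - P)` vanishes on `range P`, inverts
`(id - P) ∘ D` on `ker P`, and inherits the bounds of `V`. -/

section NearIdentity

variable {E : Type*} [SeminormedAddCommGroup E]

theorem norm_le_two_mul_of_norm_sub_le {x y : E} {k : ℝ} (hk : k ≤ 1 / 2)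
    (h : ‖y - x‖ ≤ k * ‖y‖) : ‖y‖ ≤ 2 * ‖x‖ := by
  have := norm_le_insert' y x
  nlinarith [norm_nonneg y]

theorem norm_sub_le_two_mul_of_norm_sub_le {x y : E} {k : ℝ} (hk0 : 0 ≤ k) (hk : k ≤ 1 / 2)
    (h : ‖y - x‖ ≤ k * ‖y‖) : ‖y - x‖ ≤ 2 * k * ‖x‖ := by
  nlinarith [norm_le_two_mul_of_norm_sub_le hk h]

end NearIdentity

namespace ContinuousLinearMap

variable {𝕜 K : Type*} [NontriviallyNormedField 𝕜] [NormedAddCommGroup K] [NormedSpace 𝕜 K]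
  [CompleteSpace K]

theorem exists_rightInverse_of_norm_sub_apply_le (T : K →L[𝕜] K) {k : ℝ} (hk0 : 0 ≤ k)
    (hk : k ≤ 1 / 2) (hT : ∀ x, ‖x - T x‖ ≤ k * ‖x‖) :
    ∃ V : K →L[𝕜] K, ∀ x, T (V x) = x ∧ ‖V x‖ ≤ 2 * ‖x‖ ∧ ‖V x - x‖ ≤ 2 * k * ‖x‖ := by
  have hnorm : ‖1 - T‖ < 1 := ((1 - T).opNorm_le_bound hk0 hT).trans_lt (by linarith)
  obtain ⟨V, hV⟩ := (isUnit_one_sub_of_norm_lt_one hnorm).exists_right_inv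
  rw [sub_sub_cancel] at hV
  refine ⟨V, fun x => ?_⟩
  have hTV : T (V x) = x := congr($hV x)
  have hclose : ‖V x - x‖ ≤ k * ‖V x‖ := by simpa only [hTV] using hT (V x)
  exact ⟨hTV, norm_le_two_mul_of_norm_sub_le hk hclose,
    norm_sub_le_two_mul_of_norm_sub_le hk0 hk hclose⟩

end ContinuousLinearMap

section KerProj

variable {R M : Type*} [Ring R] [TopologicalSpace M] [AddCommGroup M] [Module R M]
  [IsTopologicalAddGroup M]

def kerProj (P : M →L[R] M) (hP : IsIdempotentElem P) : M →L[R] LinearMap.ker (P : M →ₗ[R] M) :=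
  (ContinuousLinearMap.id R M - P).codRestrict _ fun x => by
    simp [LinearMap.mem_ker, ← mul_apply_eq_comp, hP.eq]

variable {P : M →L[R] M} (hP : IsIdempotentElem P)

@[simp]
theorem coe_kerProj_apply (x : M) : (kerProj P hP x : M) = x - P x := rfl

theorem kerProj_eq_of_mem_ker {x : M} (hx : x ∈ LinearMap.ker (P : M →ₗ[R] M)) :
    kerProj P hP x = ⟨x, hx⟩ := by
  ext
  simpa using hx

theorem kerProj_eq_zero_of_mem_range {x : M} (hx : x ∈ LinearMap.range (P : M →ₗ[R] M)) :
    kerProj P hP x = 0 := by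
  obtain ⟨y, rfl⟩ := hx
  ext
  simp [← mul_apply_eq_comp, hP.eq]

end KerProj

/-- Construction of the partial right inverse `R₁` on the kernel of a projection.
Let `P : F → F` be a continuous linear projection, `D : E → F`, `R' : F → E`
continuous linear maps, `0 ≤ k ≤ 1/2`, and suppose
`‖(id - P)(D(R' ζ)) - ζ‖ ≤ k‖ζ‖` for every `ζ ∈ ker P`. Then there is a continuous
linear `R₁ : F → E` with: (i) `R₁ = 0` on `range P`; (ii) `(id - P)(D(R₁ ζ)) = ζ`
for `ζ ∈ ker P`; (iii) `‖R₁ ζ‖ ≤ 2‖R'‖‖ζ‖` for `ζ ∈ ker P`;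
(iv) `‖R₁ ζ - R' ζ‖ ≤ 2k‖R'‖‖ζ‖` for `ζ ∈ ker P`. -/
theorem stmt_15 {E F : Type*}
    [NormedAddCommGroup E] [NormedSpace ℝ E] [CompleteSpace E]
    [NormedAddCommGroup F] [NormedSpace ℝ F] [CompleteSpace F]
    (P : F →L[ℝ] F) (hP : P.comp P = P)
    (D : E →L[ℝ] F) (R' : F →L[ℝ] E)
    (k : ℝ) (hk0 : 0 ≤ k) (hk : k ≤ 1 / 2)
    (happrox : ∀ ζ ∈ LinearMap.ker (P : F →ₗ[ℝ] F), ‖(D (R' ζ) - P (D (R' ζ))) - ζ‖ ≤ k * ‖ζ‖) :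
    ∃ R₁ : F →L[ℝ] E,
      (∀ ζ ∈ LinearMap.range (P : F →ₗ[ℝ] F), R₁ ζ = 0) ∧
      (∀ ζ ∈ LinearMap.ker (P : F →ₗ[ℝ] F), D (R₁ ζ) - P (D (R₁ ζ)) = ζ) ∧
      (∀ ζ ∈ LinearMap.ker (P : F →ₗ[ℝ] F), ‖R₁ ζ‖ ≤ 2 * ‖R'‖ * ‖ζ‖) ∧
      (∀ ζ ∈ LinearMap.ker (P : F →ₗ[ℝ] F), ‖R₁ ζ - R' ζ‖ ≤ 2 * k * ‖R'‖ * ‖ζ‖) := by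
  set K := LinearMap.ker (P : F →ₗ[ℝ] F)
  have hP : IsIdempotentElem P := hP
  have : CompleteSpace K := P.isClosed_ker.completeSpace_coe
  set T : K →L[ℝ] K := kerProj P hP ∘L D ∘L R' ∘L K.subtypeL
  have hT : ∀ ζ : K, ‖ζ - T ζ‖ ≤ k * ‖ζ‖ := fun ζ => by
    rw [← norm_neg, neg_sub]
    exact happrox ζ ζ.2
  obtain ⟨V, hV⟩ := T.exists_rightInverse_of_norm_sub_apply_le hk0 hk hT
  refine ⟨R' ∘L K.subtypeL ∘L V ∘L kerProj P hP, ?_, fun ζ hζ => ?_, fun ζ hζ => ?_,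
    fun ζ hζ => ?_⟩
  · intro ζ hζ
    simp [kerProj_eq_zero_of_mem_range hP hζ]
  · have hTV : D (R' (V ⟨ζ, hζ⟩)) - P (D (R' (V ⟨ζ, hζ⟩))) = ζ :=
      congr(($((hV ⟨ζ, hζ⟩).1) : F))
    simpa [kerProj_eq_of_mem_ker hP hζ] using hTV
  · simpa [kerProj_eq_of_mem_ker hP hζ, mul_assoc, mul_left_comm] using
      R'.le_opNorm_of_le (hV ⟨ζ, hζ⟩).2.1
  · simpa [kerProj_eq_of_mem_ker hP hζ, ← map_sub, mul_assoc, mul_left_comm] using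
      R'.le_opNorm_of_le (hV ⟨ζ, hζ⟩).2.2
end
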